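/- arXiv:2408.02286 — 4 statements merged into one kernel-verified Lean document; each statement's English description precedes it below -/
import Mathlib

section
/- Assume θ̄ < 1. Then the reduced CARA equilibrium system has a unique solution π ∈ ℝⁿ, given explicitly by π_j = −a X_j + (δ_j + δ̄ θ_j/(1−θ̄)) b for every j ∈ {1,…,n}; that is, π solves the system if and only if π_j = −a X_j + (δ_j + δ̄ θ_j/(1−θ̄)) b for all j. -/
open Finset

/-- Case (i) of Theorem 3.5 of the paper (algebraic core): if the average
competition weight satisfies `θ̄ < 1`, the reduced CARA equilibrium system has
the unique solution `π j = -a X j + (δ j + δ̄ θ j /(1-θ̄)) b`. -/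
theorem cara_reduced_system_unique_solution
    (n : ℕ) (hn : 1 ≤ n) (a b : ℝ) (θ δ X : Fin n → ℝ)
    (hθ : ∀ j, θ j ∈ Set.Icc (0 : ℝ) 1)
    (hδ : ∀ j, 0 < δ j)
    (hθn : ∀ j, θ j < n)
    (hθbar : (1 : ℝ) / n * ∑ k, θ k < 1)
    (π : Fin n → ℝ) :
    (∀ j, π j =
        -a * (X j - θ j * ((1 : ℝ) / n * ∑ k, X k)) +
          θ j * ((1 : ℝ) / n * ∑ k, π k) + δ j * b) ↔
      (∀ j, π j =
        -a * X j +
          (δ j + ((1 : ℝ) / n * ∑ k, δ k) * θ j /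
            (1 - (1 : ℝ) / n * ∑ k, θ k)) * b) := by
  have hn0 : (0 : ℝ) < n := by
    have : 0 < n := hn
    exact_mod_cast this
  have hnne : (n : ℝ) ≠ 0 := ne_of_gt hn0
  have hlt : ∑ k, θ k < (n : ℝ) := by
    have hθbar' : (∑ k, θ k) / n < 1 := by
      rw [div_eq_inv_mul, ← one_div]; exact hθbar
    exact (div_lt_one hn0).mp hθbar'
  have hD' : (n : ℝ) - ∑ k, θ k ≠ 0 := ne_of_gt (by linarith)
  have hD : (1 : ℝ) - 1 / n * ∑ k, θ k ≠ 0 := ne_of_gt (by linarith)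
  constructor
  · intro h
    have hsum : ∑ k, π k =
        ∑ k, (-a * (X k - θ k * ((1 : ℝ) / n * ∑ k, X k)) +
          θ k * ((1 : ℝ) / n * ∑ k, π k) + δ k * b) :=
      Finset.sum_congr rfl fun j _ => h j
    have hexp : ∑ k, (-a * (X k - θ k * ((1 : ℝ) / n * ∑ k, X k)) +
          θ k * ((1 : ℝ) / n * ∑ k, π k) + δ k * b)
        = -a * ∑ k, X k
          + (a * ((1:ℝ)/n * ∑ k, X k)) * ∑ k, θ k
          + ((1:ℝ)/n * ∑ k, π k) * ∑ k, θ k + b * ∑ k, δ k := by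
      calc ∑ k, (-a * (X k - θ k * ((1 : ℝ) / n * ∑ k, X k)) +
          θ k * ((1 : ℝ) / n * ∑ k, π k) + δ k * b)
          = ∑ k, (-a * X k + (a * ((1:ℝ)/n * ∑ k, X k)) * θ k
              + ((1:ℝ)/n * ∑ k, π k) * θ k + b * δ k) := by
            apply Finset.sum_congr rfl
            intro j _
            ring
        _ = _ := by
            simp [Finset.sum_add_distrib, Finset.mul_sum, ← Finset.sum_mul,
              ← Finset.mul_sum]
    have hsum2 := hsum.trans hexp
    have hSπv : ∑ k, π k = -a * ∑ k, X k
        + b * (∑ k, δ k) / (1 - 1 / n * ∑ k, θ k) := by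
      field_simp at hsum2 ⊢
      linear_combination hsum2
    intro j
    rw [h j, hSπv]
    field_simp
    ring
  · intro h
    have hSπv : ∑ k, π k = -a * ∑ k, X k
        + b * (∑ k, δ k) / (1 - 1 / n * ∑ k, θ k) := by
      have hsum : ∑ k, π k =
          ∑ k, (-a * X k + (δ k + ((1 : ℝ) / n * ∑ k, δ k) * θ k /
            (1 - (1 : ℝ) / n * ∑ k, θ k)) * b) :=
        Finset.sum_congr rfl fun j _ => h j
      have expand : ∑ k, (-a * X k + (δ k + ((1 : ℝ) / n * ∑ k, δ k) * θ k /
            (1 - (1 : ℝ) / n * ∑ k, θ k)) * b)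
          = -a * ∑ k, X k + b * ∑ k, δ k
            + (((1:ℝ)/n * ∑ k, δ k) / (1 - (1:ℝ)/n * ∑ k, θ k) * b) * ∑ k, θ k := by
        calc ∑ k, (-a * X k + (δ k + ((1 : ℝ) / n * ∑ k, δ k) * θ k /
              (1 - (1 : ℝ) / n * ∑ k, θ k)) * b)
            = ∑ k, (-a * X k + b * δ k
              + (((1:ℝ)/n * ∑ k, δ k) / (1 - (1:ℝ)/n * ∑ k, θ k) * b) * θ k) := by
              apply Finset.sum_congr rfl
              intro j _
              ring
          _ = _ := by
              simp [Finset.sum_add_distrib, Finset.mul_sum, ← Finset.sum_mul,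
                ← Finset.mul_sum]
      rw [hsum, expand]
      field_simp
      ring
    intro j
    rw [h j, hSπv]
    field_simp
    ring
end

section
/- Assume θ̄ = 1 (equivalently, since each θ_j ∈ [0,1], θ_j = 1 for every j) and b = 0. Then π ∈ ℝⁿ solves the reduced CARA equilibrium system if and only if there exists c ∈ ℝ such that π_j = −a X_j + c for every j ∈ {1,…,n}; equivalently, π solves the system if and only if π_j = π_n − a(X_j − X_n) for all j ∈ {1,…,n−1}, with π_n arbitrary. In particular the system has infinitely many solutions. -/
open Finset

/-- Case (ii) of Theorem 3.5 of the paper (algebraic core): if `θ̄ = 1` and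
`b = 0`, the reduced CARA equilibrium system has infinitely many solutions,
namely exactly the vectors `π j = -a X j + c`, `c ∈ ℝ`, equivalently
`π j = π n - a (X j - X n)` with `π n` arbitrary. -/
theorem cara_reduced_system_infinitely_many_solutions
    (n : ℕ) (hn : 1 ≤ n) (a b : ℝ) (θ δ X : Fin n → ℝ)
    (hθ : ∀ j, θ j ∈ Set.Icc (0 : ℝ) 1)
    (hδ : ∀ j, 0 < δ j)
    (hθn : ∀ j, θ j < n)
    (hθbar : (1 : ℝ) / n * ∑ k, θ k = 1)
    (hb : b = 0) :
    (∀ π : Fin n → ℝ,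
      ((∀ j, π j =
          -a * (X j - θ j * ((1 : ℝ) / n * ∑ k, X k)) +
            θ j * ((1 : ℝ) / n * ∑ k, π k) + δ j * b) ↔
        ∃ c : ℝ, ∀ j, π j = -a * X j + c) ∧
      ((∀ j, π j =
          -a * (X j - θ j * ((1 : ℝ) / n * ∑ k, X k)) +
            θ j * ((1 : ℝ) / n * ∑ k, π k) + δ j * b) ↔
        ∀ j, π j = π ⟨n - 1, by omega⟩ - a * (X j - X ⟨n - 1, by omega⟩))) ∧
    {π : Fin n → ℝ | ∀ j, π j =
        -a * (X j - θ j * ((1 : ℝ) / n * ∑ k, X k)) +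
          θ j * ((1 : ℝ) / n * ∑ k, π k) + δ j * b}.Infinite := by
  subst hb
  have hn0 : (n : ℝ) ≠ 0 := by positivity
  have hθsum : ∑ k, θ k = (n : ℝ) := by
    field_simp at hθbar
    linarith
  have hθ1 : ∀ j, θ j = 1 := by
    have h0 : ∑ k : Fin n, (1 - θ k) = 0 := by
      rw [Finset.sum_sub_distrib, hθsum]
      simp
    intro j
    have := (Finset.sum_eq_zero_iff_of_nonneg
      (fun k _ => by linarith [(hθ k).2])).mp h0 j (mem_univ j)
    linarith
  have hiff : ∀ π : Fin n → ℝ,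
      (∀ j, π j =
          -a * (X j - θ j * ((1 : ℝ) / n * ∑ k, X k)) +
            θ j * ((1 : ℝ) / n * ∑ k, π k) + δ j * 0) ↔
        ∃ c : ℝ, ∀ j, π j = -a * X j + c := by
    intro π
    constructor
    · intro h
      refine ⟨a * ((1 : ℝ) / n * ∑ k, X k) + (1 : ℝ) / n * ∑ k, π k, fun j => ?_⟩
      have hj := h j
      rw [hθ1 j] at hj
      rw [hj]; ring
    · rintro ⟨c, hc⟩ j
      have hsum : ∑ k, π k = -a * ∑ k, X k + n * c := by
        rw [Finset.sum_congr rfl (fun k _ => hc k), Finset.sum_add_distrib,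
          ← Finset.mul_sum, Finset.sum_const, Finset.card_univ]
        simp [nsmul_eq_mul]
      rw [hθ1 j, hc j, hsum]
      field_simp
      ring
  refine ⟨fun π => ⟨hiff π, ?_⟩, ?_⟩
  · rw [hiff π]
    constructor
    · rintro ⟨c, hc⟩ j
      rw [hc j, hc ⟨n - 1, by omega⟩]; ring
    · intro h
      exact ⟨π ⟨n - 1, by omega⟩ + a * X ⟨n - 1, by omega⟩, fun j => by rw [h j]; ring⟩
  · apply Set.infinite_of_injective_forall_mem
      (f := fun c : ℝ => fun j : Fin n => -a * X j + c)
    · intro c₁ c₂ h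
      have := congrFun h ⟨0, by omega⟩
      simpa using this
    · intro c
      exact (hiff _).mpr ⟨c, fun j => rfl⟩
end

section
/- Assume θ̄ = 1 and b ≠ 0. Then the reduced CARA equilibrium system has no solution π ∈ ℝⁿ. -/
open Finset

/-- Case (iii) of Theorem 3.5 of the paper (algebraic core): if `θ̄ = 1` and
`b ≠ 0`, the reduced CARA equilibrium system has no solution. -/
theorem cara_reduced_system_no_solution
    (n : ℕ) (hn : 1 ≤ n) (a b : ℝ) (θ δ X : Fin n → ℝ)
    (hθ : ∀ j, θ j ∈ Set.Icc (0 : ℝ) 1)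
    (hδ : ∀ j, 0 < δ j)
    (hθn : ∀ j, θ j < n)
    (hθbar : (1 : ℝ) / n * ∑ k, θ k = 1)
    (hb : b ≠ 0) :
    ¬ ∃ π : Fin n → ℝ, ∀ j, π j =
        -a * (X j - θ j * ((1 : ℝ) / n * ∑ k, X k)) +
          θ j * ((1 : ℝ) / n * ∑ k, π k) + δ j * b := by
  rintro ⟨π, hπ⟩
  have hn0 : (0 : ℝ) < n := by exact_mod_cast hn
  have hθsum : ∑ k, θ k = n := by
    field_simp at hθbar
    linarith [hθbar]
  have hsum : ∑ j, π j = ∑ j,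
      (-a * (X j - θ j * ((1 : ℝ) / n * ∑ k, X k)) +
        θ j * ((1 : ℝ) / n * ∑ k, π k) + δ j * b) :=
    Finset.sum_congr rfl fun j _ => hπ j
  have hδsum : 0 < ∑ j, δ j :=
    Finset.sum_pos (fun j _ => hδ j) (Finset.univ_nonempty_iff.2
      ⟨⟨0, hn⟩⟩)
  have : (∑ j, δ j) * b = 0 := by
    have h := hsum
    simp only [Finset.sum_add_distrib, ← Finset.sum_mul, ← Finset.mul_sum,
      Finset.mul_sum, mul_comm] at h
    have key : ∑ x : Fin n, -a * (X x - θ x * ((∑ k, X k) * (1 / (n:ℝ)))) = 0 := by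
      rw [← Finset.mul_sum, Finset.sum_sub_distrib, ← Finset.sum_mul, hθsum]
      field_simp
      ring
    rw [key, ← Finset.mul_sum, hθsum] at h
    have hne : (n:ℝ) ≠ 0 := ne_of_gt hn0
    field_simp at h
    linarith [mul_comm b (∑ j, δ j)]
  rcases mul_eq_zero.1 this with h | h
  · exact absurd h (ne_of_gt hδsum)
  · exact hb h
end

section
/- The CRRA equilibrium system has a unique solution π ∈ ℝⁿ, given explicitly by σπ_j = C_1^j ρ + Λ̂_j + δ_jγ_jλ̄Λ̄ for every j ∈ {1,…,n}; that is, π solves the system if and only if σπ_j = C_1^j ρ + Λ̂_j + δ_jγ_jλ̄Λ̄ for all j. -/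
open Finset

/-- The algebraic core of the Nash equilibrium formula (4.12) in Theorem 4.4
of the paper: the CRRA equilibrium system has the unique solution
`σπⱼ = C₁ʲρ + Λ̂ⱼ + δⱼγⱼλ̄Λ̄`. -/
theorem crra_equilibrium_system_unique_solution
    (n : ℕ) (hn : 1 ≤ n) (σ ρ r : ℝ) (hσ : 0 < σ)
    (θ δ : Fin n → ℝ)
    (hθ : ∀ j, θ j ∈ Set.Icc (0 : ℝ) 1) (hδ : ∀ j, 0 < δ j)
    (γ : Fin n → ℝ)
    (hγ : ∀ j, γ j = -(θ j) * (1 - 1 / δ j))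
    (δbar lamBar : ℝ)
    (hδbar : δbar = (1 : ℝ) / n * ∑ k, δ k)
    (hlamBar : lamBar = 1 / (1 - (1 : ℝ) / n * ∑ k, δ k * γ k))
    (C1 : Fin n → ℝ) (hC1 : ∀ j, C1 j = δ j * γ j * lamBar * δbar + δ j)
    (Λ Λhat : Fin n → ℝ) (hΛhat : ∀ j, Λhat j = δ j * Λ j)
    (Λbar : ℝ) (hΛbar : Λbar = (1 : ℝ) / n * ∑ k, Λhat k)
    (π : Fin n → ℝ) :
    (∀ j, σ * π j = δ j * ρ + Λhat j +
        δ j * γ j * (σ * ((1 : ℝ) / n * ∑ k, π k))) ↔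
      (∀ j, σ * π j = C1 j * ρ + Λhat j + δ j * γ j * lamBar * Λbar) := by
  have hn' : (0 : ℝ) < n := by positivity
  have hn0 : (n : ℝ) ≠ 0 := ne_of_gt hn'
  set d : ℝ := (1 : ℝ) / n * ∑ k, δ k * γ k with hd
  -- each δ j * γ j < 1
  have hterm : ∀ k, δ k * γ k < 1 := by
    intro k
    have hδk := hδ k
    have h1 := (hθ k).1
    have h2 := (hθ k).2
    have heq : δ k * γ k = θ k * (1 - δ k) := by
      rw [hγ k]; field_simp; ring
    rw [heq]
    rcases h1.eq_or_lt with h0 | h0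
    · nlinarith
    · nlinarith [mul_pos h0 hδk]
  have hdlt : d < 1 := by
    have hne : (Finset.univ : Finset (Fin n)).Nonempty := by
      simpa [Finset.univ_nonempty_iff] using Fin.pos_iff_nonempty.mp hn
    have hsum : ∑ k, δ k * γ k < ∑ _k : Fin n, (1 : ℝ) :=
      Finset.sum_lt_sum_of_nonempty hne fun k _ => hterm k
    have hone : ∑ _k : Fin n, (1 : ℝ) = n := by simp
    rw [hd]
    calc (1 : ℝ) / n * ∑ k, δ k * γ k < (1 : ℝ) / n * n := by
          apply mul_lt_mul_of_pos_left _ (by positivity)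
          rw [← hone]; exact hsum
      _ = 1 := by field_simp
  have h1d : (1 : ℝ) - d ≠ 0 := sub_ne_zero.mpr hdlt.ne'
  have hl : lamBar * (1 - d) = 1 := by
    rw [hlamBar]; field_simp
  constructor
  · intro h j
    have hsum : σ * ∑ k, π k = (∑ k, δ k) * ρ + (∑ k, Λhat k) +
        (∑ k, δ k * γ k) * (σ * ((1 : ℝ) / n * ∑ k, π k)) := by
      rw [Finset.mul_sum]
      calc ∑ k, σ * π k
          = ∑ k, (δ k * ρ + Λhat k +
              δ k * γ k * (σ * ((1 : ℝ) / n * ∑ k, π k))) :=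
            Finset.sum_congr rfl fun k _ => h k
        _ = _ := by
            rw [Finset.sum_add_distrib, Finset.sum_add_distrib,
              ← Finset.sum_mul, ← Finset.sum_mul]
    have hS : σ * ((1 : ℝ) / n * ∑ k, π k) =
        δbar * ρ + Λbar + d * (σ * ((1 : ℝ) / n * ∑ k, π k)) := by
      linear_combination ((1 : ℝ) / n) * hsum - ρ * hδbar - hΛbar -
        (σ * ((1 : ℝ) / n * ∑ k, π k)) * hd
    have hSval : σ * ((1 : ℝ) / n * ∑ k, π k) = lamBar * (δbar * ρ + Λbar) := by
      linear_combination lamBar * hS - (σ * ((1 : ℝ) / n * ∑ k, π k)) * hl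
    rw [h j, hC1 j]
    linear_combination (δ j * γ j) * hSval
  · intro h j
    have e1 : ∀ k, C1 k * ρ + Λhat k + δ k * γ k * lamBar * Λbar =
        (δ k * γ k) * (lamBar * δbar * ρ + lamBar * Λbar) + (δ k * ρ + Λhat k) :=
      fun k => by rw [hC1 k]; ring
    have hsum2 : σ * ∑ k, π k =
        (∑ k, δ k * γ k) * (lamBar * δbar * ρ + lamBar * Λbar) +
          ((∑ k, δ k) * ρ + ∑ k, Λhat k) := by
      rw [Finset.mul_sum]
      calc ∑ k, σ * π k
          = ∑ k, ((δ k * γ k) * (lamBar * δbar * ρ + lamBar * Λbar) +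
              (δ k * ρ + Λhat k)) :=
            Finset.sum_congr rfl fun k _ => by rw [h k, e1 k]
        _ = _ := by
            rw [Finset.sum_add_distrib, ← Finset.sum_mul, Finset.sum_add_distrib,
              ← Finset.sum_mul]
    have h2 : σ * ((1 : ℝ) / n * ∑ k, π k) =
        d * (lamBar * δbar * ρ + lamBar * Λbar) + (δbar * ρ + Λbar) := by
      linear_combination ((1 : ℝ) / n) * hsum2 -
        (lamBar * δbar * ρ + lamBar * Λbar) * hd - ρ * hδbar - hΛbar
    have hSval : σ * ((1 : ℝ) / n * ∑ k, π k) = lamBar * (δbar * ρ + Λbar) := by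
      linear_combination h2 - (δbar * ρ + Λbar) * hl
    rw [h j, hC1 j]
    linear_combination -(δ j * γ j) * hSval
end
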